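/- Let F be a field of characteristic zero, fix a monomial ordering ≺ on F[x_1,...,x_d], and let Δ = δ_0 ∘ {P_1(D),...,P_n(D)} be interpolation conditions given by linearly independent polynomials P_1,...,P_n ∈ F[x_1,...,x_d]. Then there exists a unique ≺-minimal monomial interpolating basis for Δ: there is a monomial interpolating basis T for Δ such that no monomial interpolating basis T' for Δ satisfies T' ≺ T, and such T is unique. -/

import Mathlib

open MvPolynomial

/-- The iterated partial derivative operator `D^α = ∂^{α_1}_{x_1} ⋯ ∂^{α_d}_{x_d}`. -/
noncomputable def Dmon (F : Type*) [CommSemiring F] {d : ℕ} (α : Fin d →₀ ℕ) :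
    Module.End F (MvPolynomial (Fin d) F) :=
  ((List.finRange d).map fun i =>
    ((pderiv i : Derivation F (MvPolynomial (Fin d) F) (MvPolynomial (Fin d) F)) :
      MvPolynomial (Fin d) F →ₗ[F] MvPolynomial (Fin d) F) ^ (α i)).prod

/-- The differential operator `P(D) = Σ_α P̂(α) D^α` induced by a polynomial `P`. -/
noncomputable def PD {F : Type*} [Field F] {d : ℕ} (P : MvPolynomial (Fin d) F) :
    Module.End F (MvPolynomial (Fin d) F) :=
  ∑ α ∈ P.support, P.coeff α • Dmon F α

/-- The linear functional `δ₀ ∘ P(D) : g ↦ (P(D) g)(0)`. -/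
noncomputable def delta0PD {F : Type*} [Field F] {d : ℕ} (P : MvPolynomial (Fin d) F) :
    MvPolynomial (Fin d) F →ₗ[F] F :=
  (MvPolynomial.aeval (0 : Fin d → F)).toLinearMap ∘ₗ PD P

/-- `prec` is a monomial ordering: a linear well-ordering of the monomials (identified with
their exponent vectors) that is compatible with multiplication of monomials. -/
structure IsMonomialOrder {d : ℕ} (prec : (Fin d →₀ ℕ) → (Fin d →₀ ℕ) → Prop) : Prop where
  irrefl : ∀ a, ¬ prec a a
  trans : ∀ a b c, prec a b → prec b c → prec a c
  total : ∀ a b, a ≠ b → prec a b ∨ prec b a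
  wf : WellFounded prec
  add_compat : ∀ a b c, prec a b → prec (a + c) (b + c)

/-- `m` is the `prec`-least monomial occurring in `P` with nonzero coefficient,
i.e. `X^m = lm(P)`. -/
def IsLeastMon {F : Type*} [Field F] {d : ℕ} (prec : (Fin d →₀ ℕ) → (Fin d →₀ ℕ) → Prop)
    (P : MvPolynomial (Fin d) F) (m : Fin d →₀ ℕ) : Prop :=
  m ∈ P.support ∧ ∀ m' ∈ P.support, m' ≠ m → prec m m'

/-- `{P_1, ..., P_n}` is a "reverse" reduced basis w.r.t. `prec`: the `P_i` are linearly
independent and `lm(P_i) ∉ Λ{P_j}` for all `i < j`. -/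
def IsRevReducedBasis {F : Type*} [Field F] {d n : ℕ}
    (prec : (Fin d →₀ ℕ) → (Fin d →₀ ℕ) → Prop) (P : Fin n → MvPolynomial (Fin d) F) : Prop :=
  LinearIndependent F P ∧
    ∀ i j : Fin n, i < j → ∀ m, IsLeastMon prec (P i) m → m ∉ (P j).support

/-- The finset of exponent vectors `T` is a monomial interpolating basis for the `n`
interpolation conditions `lam`: `T` has `n` (distinct) elements and for every vector of
values `f` there is a unique `g` in the span of the monomials `X^m`, `m ∈ T`, with
`lam i g = f i` for all `i`. -/
def IsMonIntBasisSet {F : Type*} [Field F] {d n : ℕ}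
    (lam : Fin n → (MvPolynomial (Fin d) F →ₗ[F] F)) (T : Finset (Fin d →₀ ℕ)) : Prop :=
  T.card = n ∧ ∀ f : Fin n → F, ∃! g : MvPolynomial (Fin d) F,
    g ∈ Submodule.span F ((fun m => (monomial m (1 : F) : MvPolynomial (Fin d) F)) ''
        (T : Set (Fin d →₀ ℕ))) ∧ ∀ i, lam i g = f i

/-- `m` is the `prec`-greatest element of the finset `S`. -/
def IsMaxOf {d : ℕ} (prec : (Fin d →₀ ℕ) → (Fin d →₀ ℕ) → Prop)
    (S : Finset (Fin d →₀ ℕ)) (m : Fin d →₀ ℕ) : Prop :=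
  m ∈ S ∧ ∀ m' ∈ S, m' ≠ m → prec m' m

/-- `T' ≺ T` for two finsets of monomials with `T − T' ≠ ∅` and `T' − T ≠ ∅`:
`max_≺ (T' − T) ≺ max_≺ (T − T')`. -/
def SetPrec {d : ℕ} (prec : (Fin d →₀ ℕ) → (Fin d →₀ ℕ) → Prop)
    (T' T : Finset (Fin d →₀ ℕ)) : Prop :=
  ∃ a b, IsMaxOf prec (T' \ T) a ∧ IsMaxOf prec (T \ T') b ∧ prec a b

/-!
Applying `δ₀ ∘ P_i(D)` to `X^m` gives `(∏ j, m_j!) · coeff_m(P_i)`, so (in characteristic zero)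
`T` is a monomial interpolating basis iff the coefficient columns `c_m = (coeff_m P_i)_i`,
`m ∈ T`, form a basis of `Fⁿ`; these columns span `Fⁿ` because the `P_i` are independent.
The `≺`-minimal basis is the greedy one, `G = {m | c_m ∉ span {c_m' | m' ≺ m}}`. If `T` is any
other basis and `x ∈ G \ T`, the columns of `T` below `x` lie in the span of those of `G` below
`x`, so `T` has at most as many elements below `x` as `G`; counting then forces an element of
`T \ G` above `x`. Hence `max (G \ T) ≺ max (T \ G)`, i.e. `G ≺ T`, for every other basis `T`.
-/

section Derivatives

variable {R σ : Type*} [CommSemiring R]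

lemma pderiv_pow_monomial (i : σ) (k : ℕ) (m : σ →₀ ℕ) (c : R) :
    ((pderiv (R := R) i).toLinearMap ^ k) (monomial m c) =
      monomial (m - Finsupp.single i k) (c * (m i).descFactorial k) := by
  induction k with
  | zero => simp
  | succ k ih =>
    rw [pow_succ', Module.End.mul_apply, ih, Derivation.coeFn_coe, pderiv_monomial, tsub_tsub,
      ← Finsupp.single_add, Finsupp.tsub_apply, Finsupp.single_eq_same, Nat.descFactorial_succ]
    push_cast
    congr 1
    ring

lemma list_sum_map_single_apply_of_notMem (α : σ →₀ ℕ) {L : List σ} {a : σ} (ha : a ∉ L) :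
    (L.map fun i => Finsupp.single i (α i)).sum a = 0 := by
  induction L with
  | nil => rfl
  | cons b L ih => simp_all [eq_comm]

lemma list_prod_pderiv_pow_monomial (α : σ →₀ ℕ) {L : List σ} (hL : L.Nodup) (m : σ →₀ ℕ)
    (c : R) :
    (L.map fun i => (pderiv (R := R) i).toLinearMap ^ α i).prod (monomial m c) =
      monomial (m - (L.map fun i => Finsupp.single i (α i)).sum)
        (c * (L.map fun i => ((m i).descFactorial (α i) : R)).prod) := by
  induction L with
  | nil => simp
  | cons a l ih =>
    obtain ⟨hal, hl⟩ := List.nodup_cons.1 hL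
    simp only [List.map_cons, List.prod_cons, List.sum_cons, Module.End.mul_apply]
    rw [ih hl, pderiv_pow_monomial, tsub_tsub, add_comm, Finsupp.tsub_apply,
      list_sum_map_single_apply_of_notMem α hal, Nat.sub_zero]
    congr 1
    ring

lemma Dmon_monomial {d : ℕ} (α m : Fin d →₀ ℕ) (c : R) :
    Dmon R α (monomial m c) =
      monomial (m - α) (c * ∏ i, ((m i).descFactorial (α i) : R)) := by
  rw [Dmon, list_prod_pderiv_pow_monomial α (List.nodup_finRange d), ← Fin.sum_univ_def,
    ← Fin.prod_univ_def, Finsupp.univ_sum_single]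

open Nat in
lemma constantCoeff_Dmon_monomial {d : ℕ} (α m : Fin d →₀ ℕ) (c : R) :
    constantCoeff (Dmon R α (monomial m c)) = if α = m then c * ∏ i, ((m i)! : R) else 0 := by
  rw [Dmon_monomial, constantCoeff_monomial]
  by_cases hαm : α = m
  · subst hαm
    simp [Nat.descFactorial_self]
  rw [if_neg hαm, ite_eq_right_iff]
  intro hle
  obtain ⟨i, hi⟩ : ∃ i, m i < α i := by
    by_contra! h
    exact hαm (le_antisymm h (tsub_eq_zero_iff_le.1 hle))
  rw [Finset.prod_eq_zero (Finset.mem_univ i), mul_zero]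
  rw [Nat.descFactorial_eq_zero_iff_lt.2 hi, Nat.cast_zero]

end Derivatives

open Nat in
lemma delta0PD_monomial_one {F : Type*} [Field F] {d : ℕ} (Q : MvPolynomial (Fin d) F)
    (m : Fin d →₀ ℕ) :
    delta0PD Q (monomial m 1) = (∏ i, ((m i)! : F)) * Q.coeff m := by
  simp only [delta0PD, PD, LinearMap.comp_apply, LinearMap.sum_apply, LinearMap.smul_apply,
    map_sum, map_smul, AlgHom.toLinearMap_apply, aeval_zero, Algebra.algebraMap_self,
    RingHom.id_apply, constantCoeff_Dmon_monomial, smul_eq_mul, mul_ite, mul_zero, one_mul]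
  rw [Finset.sum_ite_eq']
  split_ifs with hm
  · ring
  · rw [notMem_support_iff.1 hm, mul_zero]

section Interpolation

open Submodule Set

theorem Function.Injective.existsUnique_mem_range_and_iff {α β : Type*} {f : α → β}
    (hf : Function.Injective f) {p : β → Prop} :
    (∃! b, b ∈ range f ∧ p b) ↔ ∃! a, p (f a) := by
  constructor
  · rintro ⟨_, ⟨⟨a, rfl⟩, ha⟩, huniq⟩
    exact ⟨a, ha, fun a' ha' => hf (huniq _ ⟨mem_range_self a', ha'⟩)⟩
  · rintro ⟨a, ha, huniq⟩
    refine ⟨f a, ⟨mem_range_self a, ha⟩, ?_⟩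
    rintro _ ⟨⟨a', rfl⟩, ha'⟩
    rw [huniq a' ha']

theorem existsUnique_mem_span_iff_linearIndependent {K V W ι : Type*} [Field K]
    [AddCommGroup V] [Module K V] [AddCommGroup W] [Module K W] [FiniteDimensional K W]
    [Fintype ι] {v : ι → V} (hv : LinearIndependent K v) (Φ : V →ₗ[K] W)
    (hcard : Fintype.card ι = Module.finrank K W) :
    (∀ w, ∃! x, x ∈ span K (range v) ∧ Φ x = w) ↔ LinearIndependent K (Φ ∘ v) := by
  have hfr : Module.finrank K (ι →₀ K) = Module.finrank K W := by
    rw [Module.finrank_finsupp_self, hcard]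
  simp only [← Finsupp.range_linearCombination, LinearMap.mem_range, ← Set.mem_range,
    hv.existsUnique_mem_range_and_iff, Finsupp.apply_linearCombination,
    ← Function.bijective_iff_existsUnique, LinearIndependent]
  exact ⟨And.left, fun h =>
    ⟨h, (LinearMap.injective_iff_surjective_of_finrank_eq_finrank hfr).1 h⟩⟩

variable {F : Type*} [Field F] {d n : ℕ}

theorem isMonIntBasisSet_iff (lam : Fin n → (MvPolynomial (Fin d) F →ₗ[F] F))
    (T : Finset (Fin d →₀ ℕ)) :
    IsMonIntBasisSet lam T ↔
      T.card = n ∧ LinearIndepOn F (fun m i => lam i (monomial m 1)) (T : Set (Fin d →₀ ℕ)) := by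
  have hv : LinearIndependent F fun m : (T : Set (Fin d →₀ ℕ)) =>
      (monomial m.1 1 : MvPolynomial (Fin d) F) := by
    have h := (basisMonomials (Fin d) F).linearIndependent
    rw [coe_basisMonomials] at h
    exact h.comp _ Subtype.val_injective
  rw [IsMonIntBasisSet, image_eq_range]
  refine and_congr_right fun hcard => ?_
  have key :=
    existsUnique_mem_span_iff_linearIndependent hv (LinearMap.pi lam) (by simp [hcard])
  simp only [funext_iff, LinearMap.pi_apply] at key
  exact key

def coeffVec {R σ ι : Type*} [CommSemiring R] (P : ι → MvPolynomial σ R) (m : σ →₀ ℕ) : ι → R :=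
  fun i => (P i).coeff m

open Nat in
theorem isMonIntBasisSet_delta0PD_iff [CharZero F]
    (P : Fin n → MvPolynomial (Fin d) F) (T : Finset (Fin d →₀ ℕ)) :
    IsMonIntBasisSet (fun i => delta0PD (P i)) T ↔
      T.card = n ∧ LinearIndepOn F (coeffVec P) (T : Set (Fin d →₀ ℕ)) := by
  rw [isMonIntBasisSet_iff]
  refine and_congr_right fun _ => ?_
  let w (m : Fin d →₀ ℕ) : Fˣ := Units.mk0 (∏ i, ((m i)! : F))
    (Finset.prod_ne_zero_iff.2 fun i _ => Nat.cast_ne_zero.2 (Nat.factorial_ne_zero _))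
  have hw : (fun m i => delta0PD (P i) (monomial m 1)) = w • coeffVec P := by
    ext m i
    simp [delta0PD_monomial_one, w, coeffVec, Units.smul_def]
  rw [hw]
  exact LinearIndependent.units_smul_iff (fun m : (T : Set (Fin d →₀ ℕ)) => coeffVec P m)
    (fun m => w m)

theorem span_range_coeffVec {σ ι : Type*} [Fintype ι] {P : ι → MvPolynomial σ F}
    (hP : LinearIndependent F P) : span F (range (coeffVec P)) = ⊤ := by
  classical
  by_contra hne
  obtain ⟨φ, hφ, hle⟩ := exists_le_ker_of_lt_top _ (lt_top_iff_ne_top.2 hne)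
  set a : ι → F := fun i => φ fun j => if i = j then 1 else 0
  have hφa (x : ι → F) : φ x = ∑ i, x i * a i := φ.pi_apply_eq_sum_univ x
  have hsum : ∑ i, a i • P i = 0 := by
    ext m
    have hm := hle (subset_span (mem_range_self m))
    rw [LinearMap.mem_ker, hφa] at hm
    simpa [coeffVec, coeff_sum, mul_comm] using hm
  have ha := Fintype.linearIndependent_iff.1 hP a hsum
  exact hφ (LinearMap.ext fun x => by simp [hφa, ha])

end Interpolation

section Greedy

open Submodule Set

variable (K : Type*) {ι V : Type*} [Field K] [AddCommGroup V] [Module K V]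
  (r : ι → ι → Prop) [IsWellOrder ι r] (v : ι → V)

def greedyBasis : Set ι := {i | v i ∉ span K (v '' {j | r j i})}

variable {K r v}

theorem span_image_rel_le_span_image_greedyBasis (i : ι) :
    span K (v '' {j | r j i}) ≤ span K (v '' {j ∈ greedyBasis K r v | r j i}) := by
  induction i using IsWellFounded.induction r with
  | ind i ih =>
  rw [span_le]
  rintro _ ⟨j, hji, rfl⟩
  by_cases hj : j ∈ greedyBasis K r v
  · exact subset_span (mem_image_of_mem v ⟨hj, hji⟩)
  · refine span_mono (image_mono ?_) (ih j hji (not_not.1 hj))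
    exact fun k hk => ⟨hk.1, _root_.trans hk.2 hji⟩

theorem span_image_greedyBasis : span K (v '' greedyBasis K r v) = span K (range v) := by
  refine le_antisymm (span_mono (image_subset_range _ _)) (span_le.2 ?_)
  rintro _ ⟨i, rfl⟩
  by_cases hi : i ∈ greedyBasis K r v
  · exact subset_span (mem_image_of_mem v hi)
  · exact span_mono (image_mono fun j hj => hj.1)
      (span_image_rel_le_span_image_greedyBasis i (not_not.1 hi))

theorem linearIndepOn_greedyBasis : LinearIndepOn K v (greedyBasis K r v) := by
  let := IsWellOrder.linearOrder r
  suffices h : ∀ s : Finset ι, ↑s ⊆ greedyBasis K r v → LinearIndepOn K v s from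
    linearIndepOn_of_finite _ fun t ht htfin => by simpa using h htfin.toFinset (by simpa using ht)
  intro s
  induction s using Finset.induction_on_max with
  | empty => simp
  | insert a s hlt ih =>
    intro hs
    rw [Finset.coe_insert, Set.insert_subset_iff] at hs
    rw [Finset.coe_insert, linearIndepOn_insert (fun ha => lt_irrefl a (hlt a ha))]
    exact ⟨ih hs.2, fun hmem => hs.1 (span_mono (image_mono hlt) hmem)⟩

variable [FiniteDimensional K V]

theorem finite_greedyBasis : (greedyBasis K r v).Finite :=
  Set.finite_coe_iff.1 (linearIndepOn_greedyBasis (K := K) (r := r) (v := v)).finite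

variable (K r v) in
noncomputable def greedyFinset : Finset ι :=
  (finite_greedyBasis (K := K) (r := r) (v := v)).toFinset

theorem coe_greedyFinset : (greedyFinset K r v : Set ι) = greedyBasis K r v :=
  Set.Finite.coe_toFinset _

theorem linearIndepOn_greedyFinset : LinearIndepOn K v (greedyFinset K r v : Set ι) := by
  rw [coe_greedyFinset]
  exact linearIndepOn_greedyBasis

theorem card_greedyFinset (hspan : span K (range v) = ⊤) :
    (greedyFinset K r v).card = Module.finrank K V := by
  have h := finrank_span_eq_card (linearIndepOn_greedyFinset (K := K) (r := r) (v := v))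
  have hG : span K (range fun i : (greedyFinset K r v : Set ι) => v i) = ⊤ := by
    rw [← image_eq_range, coe_greedyFinset, span_image_greedyBasis, hspan]
  rw [hG, finrank_top] at h
  simp only [Finset.coe_sort_coe, Fintype.card_coe] at h
  exact h.symm

theorem card_filter_rel_le_card_filter_greedyFinset [DecidableRel r] {T : Finset ι}
    (hT : LinearIndepOn K v (T : Set ι)) (x : ι) :
    (T.filter (r · x)).card ≤ ((greedyFinset K r v).filter (r · x)).card := by
  classical
  set Tx := T.filter (r · x)
  set Gx := (greedyFinset K r v).filter (r · x)
  have hTx : LinearIndepOn K v (Tx : Set ι) :=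
    hT.mono (Finset.coe_subset.2 (Finset.filter_subset _ _))
  have hGx : (Gx.image v : Set V) = v '' {j ∈ greedyBasis K r v | r j x} := by
    rw [Finset.coe_image, Finset.coe_filter, ← coe_greedyFinset]
    rfl
  have hle : v '' Tx ⊆ span K (Gx.image v : Set V) := by
    rintro _ ⟨t, ht, rfl⟩
    rw [hGx]
    exact span_image_rel_le_span_image_greedyBasis x
      (subset_span (mem_image_of_mem v (Finset.mem_filter.1 ht).2))
  calc Tx.card
      ≤ (v '' Tx).finrank K := by
        have h := linearIndependent_iff_card_le_finrank_span.1 hTx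
        rw [← image_eq_range] at h
        simpa only [Finset.coe_sort_coe, Fintype.card_coe] using h
    _ ≤ (Gx.image v : Set V).finrank K := Submodule.finrank_mono (span_le.2 hle)
    _ ≤ (Gx.image v).card := finrank_span_finset_le_card _
    _ ≤ Gx.card := Finset.card_image_le

theorem exists_rel_of_mem_greedyFinset_sdiff [DecidableEq ι] {T : Finset ι}
    (hT : LinearIndepOn K v (T : Set ι)) (hcard : (greedyFinset K r v).card ≤ T.card) {x : ι}
    (hx : x ∈ greedyFinset K r v \ T) :
    ∃ t ∈ T \ greedyFinset K r v, r x t := by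
  classical
  set G := greedyFinset K r v
  obtain ⟨hxG, hxT⟩ := Finset.mem_sdiff.1 hx
  by_contra! hbelow
  have hsub : T.filter (¬ r · x) ⊆ G.filter (¬ r · x) := by
    intro t ht
    obtain ⟨htT, htx⟩ := Finset.mem_filter.1 ht
    have hxt : r x t :=
      ((trichotomous_of r t x).resolve_left htx).resolve_left fun h => hxT (h ▸ htT)
    have htG : t ∈ G := by_contra fun htG => hbelow t (Finset.mem_sdiff.2 ⟨htT, htG⟩) hxt
    exact Finset.mem_filter.2 ⟨htG, htx⟩
  have hssub : T.filter (¬ r · x) ⊂ G.filter (¬ r · x) :=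
    (Finset.ssubset_iff_of_subset hsub).2
      ⟨x, Finset.mem_filter.2 ⟨hxG, irrefl x⟩, fun h => hxT (Finset.mem_filter.1 h).1⟩
  refine hcard.not_gt ?_
  calc T.card = (T.filter (r · x)).card + (T.filter (¬ r · x)).card :=
        (Finset.card_filter_add_card_filter_not _).symm
    _ < (G.filter (r · x)).card + (G.filter (¬ r · x)).card :=
        add_lt_add_of_le_of_lt (card_filter_rel_le_card_filter_greedyFinset (r := r) hT x)
          (Finset.card_lt_card hssub)
    _ = G.card := Finset.card_filter_add_card_filter_not _

end Greedy

theorem Finset.exists_forall_ne_rel_of_nonempty {ι : Type*} (r : ι → ι → Prop)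
    [IsStrictTotalOrder ι r] {S : Finset ι} (hS : S.Nonempty) :
    ∃ m ∈ S, ∀ m' ∈ S, m' ≠ m → r m' m := by
  classical
  let := linearOrderOfSTO r
  exact ⟨S.max' hS, S.max'_mem hS, fun m hm hne => (S.le_max' m hm).lt_of_ne hne⟩

section MonomialOrder

variable {d : ℕ} {prec : (Fin d →₀ ℕ) → (Fin d →₀ ℕ) → Prop}

theorem IsMonomialOrder.isWellOrder (h : IsMonomialOrder prec) :
    IsWellOrder (Fin d →₀ ℕ) prec where
  wf := h.wf
  trichotomous a b hab hba := by_contra fun hne => (h.total a b hne).elim hab hba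

variable [IsWellOrder (Fin d →₀ ℕ) prec]

theorem exists_isMaxOf {S : Finset (Fin d →₀ ℕ)} (hS : S.Nonempty) : ∃ m, IsMaxOf prec S m := by
  obtain ⟨m, hm, hmax⟩ := S.exists_forall_ne_rel_of_nonempty prec hS
  exact ⟨m, hm, hmax⟩

theorem IsMaxOf.rel_of_rel {S : Finset (Fin d →₀ ℕ)} {a b t : Fin d →₀ ℕ}
    (hb : IsMaxOf prec S b) (ht : t ∈ S) (hat : prec a t) : prec a b := by
  by_cases htb : t = b
  · exact htb ▸ hat
  · exact _root_.trans hat (hb.2 t ht htb)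

variable {K V : Type*} [Field K] [AddCommGroup V] [Module K V] [FiniteDimensional K V]
  {v : (Fin d →₀ ℕ) → V} {T : Finset (Fin d →₀ ℕ)}

theorem not_setPrec_greedyFinset (hT : LinearIndepOn K v (T : Set (Fin d →₀ ℕ)))
    (hcard : (greedyFinset K prec v).card ≤ T.card) :
    ¬ SetPrec prec T (greedyFinset K prec v) := by
  rintro ⟨a, b, ha, hb, hab⟩
  obtain ⟨t, ht, hbt⟩ := exists_rel_of_mem_greedyFinset_sdiff hT hcard hb.1
  exact asymm hab (ha.rel_of_rel ht hbt)

theorem setPrec_greedyFinset (hT : LinearIndepOn K v (T : Set (Fin d →₀ ℕ)))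
    (hcard : T.card = (greedyFinset K prec v).card) (hne : T ≠ greedyFinset K prec v) :
    SetPrec prec (greedyFinset K prec v) T := by
  have hGT : (greedyFinset K prec v \ T).Nonempty := Finset.sdiff_nonempty.2 fun hsub =>
    hne (Finset.eq_of_subset_of_card_le hsub hcard.le).symm
  have hTG : (T \ greedyFinset K prec v).Nonempty := Finset.sdiff_nonempty.2 fun hsub =>
    hne (Finset.eq_of_subset_of_card_le hsub hcard.ge)
  obtain ⟨a, ha⟩ := exists_isMaxOf (prec := prec) hGT
  obtain ⟨b, hb⟩ := exists_isMaxOf (prec := prec) hTG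
  obtain ⟨t, ht, hat⟩ := exists_rel_of_mem_greedyFinset_sdiff hT hcard.ge ha.1
  exact ⟨a, b, ha, hb, hb.rel_of_rel ht hat⟩

end MonomialOrder

/-- For interpolation conditions `Δ = δ₀ ∘ {P_1(D), ..., P_n(D)}` given by
linearly independent polynomials and any monomial ordering `≺`, there exists a unique
`≺`-minimal monomial interpolating basis for `Δ`. -/
theorem existsUnique_minimal_monIntBasis {F : Type*} [Field F] [CharZero F] {d n : ℕ}
    (prec : (Fin d →₀ ℕ) → (Fin d →₀ ℕ) → Prop) (hord : IsMonomialOrder prec)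
    (P : Fin n → MvPolynomial (Fin d) F) (hP : LinearIndependent F P) :
    ∃! T : Finset (Fin d →₀ ℕ),
      IsMonIntBasisSet (fun i => delta0PD (P i)) T ∧
        ∀ T' : Finset (Fin d →₀ ℕ),
          IsMonIntBasisSet (fun i => delta0PD (P i)) T' → ¬ SetPrec prec T' T := by
  have := hord.isWellOrder
  have basis_iff := isMonIntBasisSet_delta0PD_iff P
  set G := greedyFinset F prec (coeffVec P)
  have hGcard : G.card = n := by
    rw [card_greedyFinset (span_range_coeffVec hP), Module.finrank_fin_fun]
  have hG : IsMonIntBasisSet (fun i => delta0PD (P i)) G :=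
    (basis_iff G).2 ⟨hGcard, linearIndepOn_greedyFinset⟩
  refine ⟨G, ⟨hG, fun T hT => ?_⟩, fun T ⟨hT, hTmin⟩ => ?_⟩
  · obtain ⟨hTcard, hTind⟩ := (basis_iff T).1 hT
    exact not_setPrec_greedyFinset hTind (hGcard.trans hTcard.symm).le
  · obtain ⟨hTcard, hTind⟩ := (basis_iff T).1 hT
    by_contra hne
    exact hTmin G hG (setPrec_greedyFinset hTind (hTcard.trans hGcard.symm) hne)
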